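/- arXiv:1010.0703 — 3 statements merged into one kernel-verified Lean document; each statement's English description precedes it below -/
import Mathlib

section
/- Let F be a strictly convex, differentiable, rotationally invariant function on symmetric positive semidefinite matrices, let L be a symmetric matrix, and let η > 0. If X* satisfies: (1) X* = (∇F)^{-1}(η(λ*I − L)) for some real λ*, (2) Tr(X*) = 1, and (3) X* ⪰ 0, then X* is an optimal solution of the problem min { L•X + (1/η)F(X) : Tr(X) = 1, X ⪰ 0 }. -/
open Matrix

attribute [local instance] Matrix.frobeniusNormedAddCommGroup Matrix.frobeniusNormedSpace

open scoped ComplexOrder in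
theorem Matrix.convex_setOf_posSemidef {n 𝕜 : Type*} [RCLike 𝕜] :
    Convex ℝ {A : Matrix n n 𝕜 | A.PosSemidef} :=
  fun _ hA _ hB _ _ ha hb _ => (hA.smul ha).add (hB.smul hb)

theorem ConvexOn.le_sub_of_hasFDerivWithinAt {E : Type*} [NormedAddCommGroup E]
    [NormedSpace ℝ E] {s : Set E} {f : E → ℝ} {f' : E →L[ℝ] ℝ} {x y : E}
    (hf : ConvexOn ℝ s f) (hx : x ∈ s) (hy : y ∈ s) (hf' : HasFDerivWithinAt f f' s x) :
    f' (y - x) ≤ f y - f x := by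
  let line := AffineMap.lineMap (k := ℝ) x y
  have hconv : ConvexOn ℝ (line ⁻¹' s) (f ∘ line) := hf.comp_affineMap line
  have hderiv : HasDerivWithinAt (f ∘ line) (f' (y - x)) (line ⁻¹' s) 0 := by
    rw [← AffineMap.lineMap_apply_zero x y (k := ℝ)] at hf'
    exact hf'.comp_hasDerivWithinAt 0 AffineMap.hasDerivWithinAt_lineMap
      (Set.mapsTo_preimage line s)
  have h0 : (0 : ℝ) ∈ line ⁻¹' s := by simpa [line] using hx
  have h1 : (1 : ℝ) ∈ line ⁻¹' s := by simpa [line] using hy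
  simpa [slope_def_field, line] using hconv.le_slope_of_hasDerivWithinAt h0 h1 one_pos hderiv

theorem regularized_sdp_optimality_general
    {n : ℕ} (L : Matrix (Fin n) (Fin n) ℝ)
    (F : Matrix (Fin n) (Fin n) ℝ → ℝ)
    -- F is strictly convex on the positive semidefinite cone
    (hFconv : ∀ X Y : Matrix (Fin n) (Fin n) ℝ, X.PosSemidef → Y.PosSemidef → X ≠ Y →
      ∀ a b : ℝ, 0 < a → 0 < b → a + b = 1 →
        F (a • X + b • Y) < a * F X + b * F Y)
    -- F is differentiable on the positive semidefinite cone, with gradient `gradF`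
    -- with respect to the trace inner product
    (gradF : Matrix (Fin n) (Fin n) ℝ → Matrix (Fin n) (Fin n) ℝ)
    (hFgrad : ∀ X : Matrix (Fin n) (Fin n) ℝ, X.PosSemidef →
      HasFDerivAt F
        (LinearMap.toContinuousLinearMap
          ((Matrix.traceLinearMap (Fin n) ℝ ℝ).comp (LinearMap.mulLeft ℝ (gradF X)))) X)
    (η : ℝ) (hη : 0 < η)
    (Xstar : Matrix (Fin n) (Fin n) ℝ) (lamStar : ℝ)
    -- condition (1): Xstar = (∇F)⁻¹ (η (λ* I − L))
    (h1 : gradF Xstar = η • (lamStar • (1 : Matrix (Fin n) (Fin n) ℝ) - L))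
    -- condition (2): Tr(Xstar) = 1
    (h2 : Xstar.trace = 1)
    -- condition (3): Xstar ⪰ 0
    (h3 : Xstar.PosSemidef) :
    ∀ Y : Matrix (Fin n) (Fin n) ℝ, Y.PosSemidef → Y.trace = 1 →
      (L * Xstar).trace + (1 / η) * F Xstar ≤ (L * Y).trace + (1 / η) * F Y := by
  intro Y hY hYtr
  have hF : ConvexOn ℝ {X : Matrix (Fin n) (Fin n) ℝ | X.PosSemidef} F :=
    StrictConvexOn.convexOn ⟨convex_setOf_posSemidef, fun X hX Y hY => hFconv X Y hX hY⟩
  have hgrad : (gradF Xstar * (Y - Xstar)).trace ≤ F Y - F Xstar :=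
    hF.le_sub_of_hasFDerivWithinAt (x := Xstar) (y := Y) h3 hY
      (hFgrad Xstar h3).hasFDerivWithinAt
  -- the multiplier `λ*` drops out because `Y - Xstar` is traceless
  have hdir : (gradF Xstar * (Y - Xstar)).trace = η * ((L * Xstar).trace - (L * Y).trace) := by
    simp [h1, sub_mul, mul_sub, trace_sub, h2, hYtr]
  rw [hdir] at hgrad
  have hscaled : (L * Xstar).trace - (L * Y).trace ≤ 1 / η * (F Y - F Xstar) := by
    rw [one_div_mul_eq_div]
    exact (le_div_iff₀' hη).2 hgrad
  linarith [mul_sub (1 / η) (F Y) (F Xstar)]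

/-- The structural theorem: sufficient conditions for `Xstar` to be an optimal
solution of the regularized SDP `min { L•X + (1/η) F(X) : Tr X = 1, X ⪰ 0 }`. -/
theorem regularized_sdp_optimality
    {n : ℕ} (L : Matrix (Fin n) (Fin n) ℝ) (hL : L.IsSymm)
    (F : Matrix (Fin n) (Fin n) ℝ → ℝ)
    -- F is strictly convex on the positive semidefinite cone
    (hFconv : ∀ X Y : Matrix (Fin n) (Fin n) ℝ, X.PosSemidef → Y.PosSemidef → X ≠ Y →
      ∀ a b : ℝ, 0 < a → 0 < b → a + b = 1 →
        F (a • X + b • Y) < a * F X + b * F Y)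
    -- F is rotationally invariant
    (hFrot : ∀ (U X : Matrix (Fin n) (Fin n) ℝ), U * Uᵀ = 1 → F (U * X * Uᵀ) = F X)
    -- F is differentiable on the positive semidefinite cone, with gradient `gradF`
    -- with respect to the trace inner product
    (gradF : Matrix (Fin n) (Fin n) ℝ → Matrix (Fin n) (Fin n) ℝ)
    (hFgrad : ∀ X : Matrix (Fin n) (Fin n) ℝ, X.PosSemidef →
      HasFDerivAt F
        (LinearMap.toContinuousLinearMap
          ((Matrix.traceLinearMap (Fin n) ℝ ℝ).comp (LinearMap.mulLeft ℝ (gradF X)))) X)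
    (η : ℝ) (hη : 0 < η)
    (Xstar : Matrix (Fin n) (Fin n) ℝ) (lamStar : ℝ)
    -- condition (1): Xstar = (∇F)⁻¹ (η (λ* I − L))
    (h1 : gradF Xstar = η • (lamStar • (1 : Matrix (Fin n) (Fin n) ℝ) - L))
    -- condition (2): Tr(Xstar) = 1
    (h2 : Xstar.trace = 1)
    -- condition (3): Xstar ⪰ 0
    (h3 : Xstar.PosSemidef) :
    ∀ Y : Matrix (Fin n) (Fin n) ℝ, Y.PosSemidef → Y.trace = 1 →
      (L * Xstar).trace + (1 / η) * F Xstar ≤ (L * Y).trace + (1 / η) * F Y :=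
  regularized_sdp_optimality_general L F hFconv gradF hFgrad η hη Xstar lamStar h1 h2 h3
end

section
/- Let L be a real symmetric matrix with largest eigenvalue λ_max, let p > 1 with conjugate exponent q (1/p + 1/q = 1) such that q − 1 is a positive integer, let λ > λ_max, and set η so that η^{q−1} Tr((λI − L)^{q−1}) = 1. Then X* = η^{q−1}(λI − L)^{q−1} is an optimal solution of min { L•X + (1/(pη)) Tr(X^p) : Tr(X) = 1, X ⪰ 0 }. -/
/-!
Put `P = η • (λI − L)`, positive semidefinite since `λ > λ_max`, so that `X* = P^k` with
`k = q − 1`. For unit-trace `Z` the objective equals `λ − (Tr(PZ) − Tr(Z^p)/p)/η`, so `X*` is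
optimal as soon as `Y ↦ Tr(PY) − Tr(Y^p)/p` is maximal over `Y ⪰ 0` at `Y = P^k`. That is the
matrix Fenchel–Young inequality `Tr(PY) ≤ Tr(P^q)/q + Tr(Y^p)/p`, with equality at `Y = P^k`
because `kp = k + 1 = q`. In the eigenbases of `P` and `Y`, `Tr(PY) = ∑ᵢⱼ Wᵢⱼ² aᵢ bⱼ` with `W`
orthogonal, so `(Wᵢⱼ²)` is doubly stochastic and scalar Young applied termwise gives the bound.
-/

open Matrix

/-- `Tr(X^p)` for real `p`, defined spectrally on (hermitian) positive
semidefinite matrices. -/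
noncomputable def tracePowR {n : ℕ} (p : ℝ) (X : Matrix (Fin n) (Fin n) ℝ) : ℝ :=
  if hX : X.IsHermitian then ∑ i, (hX.eigenvalues i) ^ p else 0

open scoped ComplexOrder Pointwise

namespace Matrix.IsHermitian

variable {𝕜 : Type*} [RCLike 𝕜] {n : Type*} [Fintype n] [DecidableEq n] {A B : Matrix n n 𝕜}

lemma sum_comp_eigenvalues_of_eq_cfc {M : Type*} [AddCommMonoid M] (hA : A.IsHermitian)
    (hB : B.IsHermitian) {f : ℝ → ℝ} (hBA : B = cfc f A) (g : ℝ → M) :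
    ∑ i, g (hB.eigenvalues i) = ∑ i, g (f (hA.eigenvalues i)) := by
  subst hBA
  have hroots := hB.roots_charpoly_eq_eigenvalues
  rw [hA.charpoly_cfc_eq f, Polynomial.roots_prod _ _ (by
    simp [Finset.prod_ne_zero_iff, Polynomial.X_sub_C_ne_zero])] at hroots
  have hmap : Finset.univ.val.map hB.eigenvalues = Finset.univ.val.map (f ∘ hA.eigenvalues) :=
    Multiset.map_injective RCLike.ofReal_injective (by simpa [Multiset.map_map] using hroots.symm)
  calc ∑ i, g (hB.eigenvalues i) = ((Finset.univ.val.map hB.eigenvalues).map g).sum := by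
        rw [Multiset.map_map]; rfl
    _ = ∑ i, g (f (hA.eigenvalues i)) := by rw [hmap, Multiset.map_map]; rfl

lemma sum_comp_eigenvalues_pow {M : Type*} [AddCommMonoid M] (hA : A.IsHermitian) (m : ℕ)
    (hAm : (A ^ m).IsHermitian) (g : ℝ → M) :
    ∑ i, g (hAm.eigenvalues i) = ∑ i, g (hA.eigenvalues i ^ m) :=
  hA.sum_comp_eigenvalues_of_eq_cfc hAm (cfc_pow_id A m hA.isSelfAdjoint).symm g

lemma trace_pow (hA : A.IsHermitian) (m : ℕ) :
    (A ^ m).trace = ∑ i, ((hA.eigenvalues i ^ m : ℝ) : 𝕜) := by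
  rw [(hA.pow m).trace_eq_sum_eigenvalues]
  exact hA.sum_comp_eigenvalues_pow m _ _

lemma posSemidef_smul_one_sub (hA : A.IsHermitian) {c : ℝ} (hc : ∀ i, hA.eigenvalues i ≤ c) :
    (c • (1 : Matrix n n 𝕜) - A).PosSemidef := by
  have hB : (c • (1 : Matrix n n 𝕜) - A).IsHermitian :=
    (isHermitian_one.smul (IsSelfAdjoint.all c)).sub hA
  refine hB.posSemidef_iff_eigenvalues_nonneg.mpr fun i => ?_
  have hspec : spectrum ℝ (c • (1 : Matrix n n 𝕜) - A) = {c} - Set.range hA.eigenvalues := by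
    rw [← Algebra.algebraMap_eq_smul_one, ← spectrum.singleton_sub_eq,
      hA.spectrum_real_eq_range_eigenvalues]
  obtain ⟨_, rfl, _, ⟨j, rfl⟩, hj⟩ := hspec ▸ hB.eigenvalues_mem_spectrum_real i
  exact hj ▸ sub_nonneg.mpr (hc j)

end Matrix.IsHermitian

section TraceYoung

variable {n : Type*} [Fintype n] [DecidableEq n]

lemma Matrix.sum_sum_sq_mul_add_of_mem_unitaryGroup {W : Matrix n n ℝ}
    (hW : W ∈ unitaryGroup n ℝ) (f g : n → ℝ) :
    ∑ i, ∑ j, W i j ^ 2 * (f i + g j) = ∑ i, f i + ∑ j, g j := by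
  have hrow : ∀ i, ∑ j, W i j ^ 2 = 1 := fun i => by
    simpa [mul_apply, sq] using congrFun₂ (mem_unitaryGroup_iff.mp hW) i i
  have hcol : ∀ j, ∑ i, W i j ^ 2 = 1 := fun j => by
    simpa [mul_apply, sq] using congrFun₂ (mem_unitaryGroup_iff'.mp hW) j j
  simp only [mul_add, Finset.sum_add_distrib, ← Finset.sum_mul, hrow, one_mul]
  rw [Finset.sum_comm]
  simp only [← Finset.sum_mul, hcol, one_mul]

lemma Matrix.IsHermitian.trace_mul_eq_sum_sq_mul {A B : Matrix n n ℝ} (hA : A.IsHermitian)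
    (hB : B.IsHermitian) :
    (A * B).trace = ∑ i, ∑ j, ((star (hA.eigenvectorUnitary : Matrix n n ℝ) *
      hB.eigenvectorUnitary) i j) ^ 2 * (hA.eigenvalues i * hB.eigenvalues j) := by
  set U := (hA.eigenvectorUnitary : Matrix n n ℝ)
  set V := (hB.eigenvectorUnitary : Matrix n n ℝ)
  have hA' : A = U * diagonal hA.eigenvalues * star U := by simpa using hA.spectral_theorem
  have hB' : B = V * diagonal hB.eigenvalues * star V := by simpa using hB.spectral_theorem
  have hU : star U * U = 1 := mem_unitaryGroup_iff'.mp hA.eigenvectorUnitary.2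
  have hU' : U * star U = 1 := mem_unitaryGroup_iff.mp hA.eigenvectorUnitary.2
  set W := star U * V
  have hAB : A * B =
      U * (diagonal hA.eigenvalues * W * diagonal hB.eigenvalues * star W) * star U := by
    simp only [hA', hB', W, star_mul, star_star, Matrix.mul_assoc, hU', Matrix.mul_one]
  rw [hAB, trace_mul_cycle, hU, Matrix.one_mul]
  simp only [trace, diag_apply, mul_apply, diagonal_apply, star_apply, star_trivial, ite_mul,
    mul_ite, zero_mul, mul_zero, Finset.sum_ite_eq, Finset.sum_ite_eq', Finset.mem_univ, if_true]
  exact Finset.sum_congr rfl fun i _ => Finset.sum_congr rfl fun j _ => by ring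

theorem Matrix.PosSemidef.trace_mul_le {A B : Matrix n n ℝ} (hA : A.PosSemidef)
    (hB : B.PosSemidef) {p q : ℝ} (hpq : p.HolderConjugate q) :
    (A * B).trace ≤ (∑ i, hA.isHermitian.eigenvalues i ^ p) / p +
      (∑ j, hB.isHermitian.eigenvalues j ^ q) / q := by
  have hW := mul_mem (Unitary.star_mem hA.isHermitian.eigenvectorUnitary.2)
    hB.isHermitian.eigenvectorUnitary.2
  rw [hA.isHermitian.trace_mul_eq_sum_sq_mul hB.isHermitian, Finset.sum_div, Finset.sum_div,
    ← sum_sum_sq_mul_add_of_mem_unitaryGroup hW]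
  gcongr with i _ j _
  exact Real.young_inequality_of_nonneg (hA.eigenvalues_nonneg i) (hB.eigenvalues_nonneg j) hpq

end TraceYoung

section FenchelYoung

variable {n : ℕ} {P Y : Matrix (Fin n) (Fin n) ℝ} {p q : ℝ}

lemma tracePowR_eq_sum (hY : Y.IsHermitian) (p : ℝ) :
    tracePowR p Y = ∑ i, hY.eigenvalues i ^ p :=
  dif_pos hY

lemma Matrix.PosSemidef.trace_mul_sub_tracePowR_le (hP : P.PosSemidef) (hY : Y.PosSemidef)
    (hpq : p.HolderConjugate q) :
    (P * Y).trace - tracePowR p Y / p ≤ (∑ i, hP.isHermitian.eigenvalues i ^ q) / q := by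
  rw [tracePowR_eq_sum hY.isHermitian]
  linarith [hP.trace_mul_le hY hpq.symm]

lemma Matrix.PosSemidef.trace_mul_pow_sub_tracePowR_pow (hP : P.PosSemidef)
    (hpq : p.HolderConjugate q) {k : ℕ} (hq : q = k + 1) :
    (P * P ^ k).trace - tracePowR p (P ^ k) / p
      = (∑ i, hP.isHermitian.eigenvalues i ^ q) / q := by
  have hkp : (k : ℝ) * p = q := by linear_combination hpq.mul_eq_add - p * hq
  have htrace : (P * P ^ k).trace = ∑ i, hP.isHermitian.eigenvalues i ^ q := by
    rw [← pow_succ', hP.isHermitian.trace_pow, hq, ← Nat.cast_add_one]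
    simp only [Real.rpow_natCast, RCLike.ofReal_real_eq_id, id]
  have hpow : tracePowR p (P ^ k) = ∑ i, hP.isHermitian.eigenvalues i ^ q := by
    rw [tracePowR_eq_sum (hP.pow k).isHermitian,
      hP.isHermitian.sum_comp_eigenvalues_pow k _ (· ^ p)]
    refine Finset.sum_congr rfl fun i _ => ?_
    rw [← Real.rpow_natCast, ← Real.rpow_mul (hP.eigenvalues_nonneg i), hkp]
  rw [htrace, hpow]
  linear_combination (-∑ i, hP.isHermitian.eigenvalues i ^ q) * hpq.inv_add_inv_eq_one

end FenchelYoung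

theorem p_norm_regularization_optimum_general
    {n : ℕ} (L : Matrix (Fin n) (Fin n) ℝ) (hLh : L.IsHermitian)
    (p q : ℝ) (hp : 1 < p) (hpq : 1 / p + 1 / q = 1)
    (k : ℕ) (hq : q - 1 = (k : ℝ))
    (lam : ℝ) (hlam : ∀ i, hLh.eigenvalues i < lam)
    (η : ℝ) (hη : 0 < η)
    (hnorm : η ^ k * ((lam • (1 : Matrix (Fin n) (Fin n) ℝ) - L) ^ k).trace = 1)
    (Xstar : Matrix (Fin n) (Fin n) ℝ)
    (hXstar : Xstar = η ^ k • (lam • (1 : Matrix (Fin n) (Fin n) ℝ) - L) ^ k) :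
    Xstar.PosSemidef ∧ Xstar.trace = 1 ∧
      ∀ Y : Matrix (Fin n) (Fin n) ℝ, Y.PosSemidef → Y.trace = 1 →
        (L * Xstar).trace + (1 / (p * η)) * tracePowR p Xstar
          ≤ (L * Y).trace + (1 / (p * η)) * tracePowR p Y := by
  have hpq' : p.HolderConjugate q :=
    Real.holderConjugate_iff.mpr ⟨hp, by simpa only [one_div] using hpq⟩
  set P := η • (lam • (1 : Matrix (Fin n) (Fin n) ℝ) - L)
  have hP : P.PosSemidef := (hLh.posSemidef_smul_one_sub fun i => (hlam i).le).smul hη.le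
  have hXtr : Xstar.trace = 1 := by rw [hXstar, trace_smul, smul_eq_mul, hnorm]
  rw [← smul_pow] at hXstar
  subst hXstar
  refine ⟨hP.pow k, hXtr, fun Y hY hYtr => ?_⟩
  have hobjective : ∀ Z : Matrix (Fin n) (Fin n) ℝ, Z.trace = 1 →
      (L * Z).trace + 1 / (p * η) * tracePowR p Z
        = lam - ((P * Z).trace - tracePowR p Z / p) / η := by
    intro Z hZ
    simp only [P, Matrix.smul_mul, Matrix.sub_mul, Matrix.one_mul, trace_smul, trace_sub, hZ,
      smul_eq_mul]
    field_simp
    ring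
  rw [hobjective _ hXtr, hobjective _ hYtr,
    hP.trace_mul_pow_sub_tracePowR_pow hpq' (by linarith)]
  gcongr
  exact hP.trace_mul_sub_tracePowR_le hY hpq'

/-- For symmetric `L`, `p > 1` with conjugate exponent `q` such that `q − 1 = k`
is a positive integer, `λ` above the largest eigenvalue of `L`, and `η` with
`η^{q−1} Tr((λI − L)^{q−1}) = 1`, the matrix `X* = η^{q−1}(λI − L)^{q−1}` is an
optimal solution of `min { L•X + (1/(pη)) Tr(X^p) : Tr X = 1, X ⪰ 0 }`. -/
theorem p_norm_regularization_optimum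
    {n : ℕ} (L : Matrix (Fin n) (Fin n) ℝ) (hL : L.IsSymm) (hLh : L.IsHermitian)
    (p q : ℝ) (hp : 1 < p) (hpq : 1 / p + 1 / q = 1)
    (k : ℕ) (hk : 0 < k) (hq : q - 1 = (k : ℝ))
    (lam : ℝ) (hlam : ∀ i, hLh.eigenvalues i < lam)
    (η : ℝ) (hη : 0 < η)
    (hnorm : η ^ k * ((lam • (1 : Matrix (Fin n) (Fin n) ℝ) - L) ^ k).trace = 1)
    (Xstar : Matrix (Fin n) (Fin n) ℝ)
    (hXstar : Xstar = η ^ k • (lam • (1 : Matrix (Fin n) (Fin n) ℝ) - L) ^ k) :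
    Xstar.PosSemidef ∧ Xstar.trace = 1 ∧
      ∀ Y : Matrix (Fin n) (Fin n) ℝ, Y.PosSemidef → Y.trace = 1 →
        (L * Xstar).trace + (1 / (p * η)) * tracePowR p Xstar
          ≤ (L * Y).trace + (1 / (p * η)) * tracePowR p Y :=
  p_norm_regularization_optimum_general L hLh p q hp hpq k hq lam hlam η hη hnorm Xstar hXstar
end

section
/- Let L = I − D^{-1/2}AD^{-1/2} be the normalized Laplacian of a connected weighted graph, and let λ < 0, η > 0 satisfy η = (1−γ)Tr((I − (1−γ)AD^{-1})^{-1}) where γ = λ/(λ−1). Then (1/η)(L − λI)^{-1} = D^{-1/2} R_γ D^{1/2} / Tr(R_γ), where R_γ = γ(I − (1−γ)AD^{-1})^{-1}. -/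
open Matrix

/-! Since `1 - γ = (1 - λ)⁻¹`, the shifted Laplacian factors as
`L - λ I = (1 - λ) (I - (1 - γ) D^{-1/2} A D^{-1/2})`, and the second factor is the
conjugate of `I - (1 - γ) A D⁻¹` by `D^{1/2}`. Hence
`(L - λ I)⁻¹ = (1 - γ) D^{-1/2} (I - (1 - γ) A D⁻¹)⁻¹ D^{1/2}`; normalizing by `η` on one
side and by `Tr R_γ` on the other removes the scalars `1 - γ` and `γ`. -/

namespace Matrix

variable {ι : Type*} [Fintype ι] [DecidableEq ι]

theorem inv_conj_of_mul_eq_one {R : Type*} [CommRing R] {P Q : Matrix ι ι R} (hPQ : P * Q = 1)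
    (M : Matrix ι ι R) : (P * M * Q)⁻¹ = P * M⁻¹ * Q := by
  rw [mul_inv_rev, mul_inv_rev, inv_eq_left_inv hPQ, inv_eq_right_inv hPQ, Matrix.mul_assoc]

theorem inv_smul_of_ne_zero {K : Type*} [Field K] {k : K} (hk : k ≠ 0) (M : Matrix ι ι K) :
    (k • M)⁻¹ = k⁻¹ • M⁻¹ := by
  have hunit : (k⁻¹ • 1 : Matrix ι ι K) * k • 1 = 1 := by
    rw [smul_mul_smul_comm, inv_mul_cancel₀ hk, one_mul, one_smul]
  rw [← smul_one_mul k M, mul_inv_rev, inv_eq_left_inv hunit, mul_smul_one]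

theorem inv_diagonal_of_ne_zero {K : Type*} [Field K] {v : ι → K} (hv : ∀ i, v i ≠ 0) :
    (diagonal v)⁻¹ = diagonal fun i => (v i)⁻¹ := by
  refine inv_eq_left_inv ?_
  rw [diagonal_mul_diagonal, ← diagonal_one]
  exact congrArg diagonal (funext fun i => inv_mul_cancel₀ (hv i))

theorem diagonal_inv_sqrt_mul_diagonal_sqrt {d : ι → ℝ} (hd : ∀ i, 0 < d i) :
    diagonal (fun i => (√(d i))⁻¹) * diagonal (fun i => √(d i)) = 1 := by
  rw [diagonal_mul_diagonal, ← diagonal_one]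
  exact congrArg diagonal (funext fun i => inv_mul_cancel₀ (Real.sqrt_pos.2 (hd i)).ne')

theorem diagonal_inv_sqrt_mul_mul_inv_diagonal_mul_diagonal_sqrt (A : Matrix ι ι ℝ) {d : ι → ℝ}
    (hd : ∀ i, d i ≠ 0) :
    diagonal (fun i => (√(d i))⁻¹) * (A * (diagonal d)⁻¹) * diagonal (fun i => √(d i))
      = diagonal (fun i => (√(d i))⁻¹) * A * diagonal (fun i => (√(d i))⁻¹) := by
  have hdiag : (diagonal d)⁻¹ * diagonal (fun i => √(d i)) = diagonal (fun i => (√(d i))⁻¹) := by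
    rw [inv_diagonal_of_ne_zero hd, diagonal_mul_diagonal]
    refine congrArg diagonal (funext fun i => ?_)
    rw [mul_comm, ← div_eq_mul_inv, Real.sqrt_div_self]
  simp only [Matrix.mul_assoc, hdiag]

end Matrix

theorem pagerank_sdp_solution_identity_general
    {n : ℕ} (A : Matrix (Fin n) (Fin n) ℝ)
    (d : Fin n → ℝ) (hdpos : ∀ i, 0 < d i)
    (Dhalf DhalfInv L : Matrix (Fin n) (Fin n) ℝ)
    (hDhalf : Dhalf = Matrix.diagonal fun i => Real.sqrt (d i))
    (hDhalfInv : DhalfInv = Matrix.diagonal fun i => (Real.sqrt (d i))⁻¹)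
    (hL : L = 1 - DhalfInv * A * DhalfInv)
    (lam γ η : ℝ) (hlam : lam < 0)
    (hγ : γ = lam / (lam - 1))
    (hη : η = (1 - γ) * ((1 - (1 - γ) • (A * (Matrix.diagonal d)⁻¹))⁻¹).trace)
    (Rγ : Matrix (Fin n) (Fin n) ℝ)
    (hR : Rγ = γ • (1 - (1 - γ) • (A * (Matrix.diagonal d)⁻¹))⁻¹) :
    η⁻¹ • (L - lam • (1 : Matrix (Fin n) (Fin n) ℝ))⁻¹
      = Rγ.trace⁻¹ • (DhalfInv * Rγ * Dhalf) := by
  have hlam1 : lam - 1 ≠ 0 := by linarith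
  have hγ0 : γ ≠ 0 := hγ ▸ div_ne_zero hlam.ne hlam1
  have hγ1 : 1 - γ = (1 - lam)⁻¹ := by
    rw [hγ, eq_comm, inv_eq_iff_eq_inv]
    field_simp
    ring
  have hγ1ne : 1 - γ ≠ 0 := hγ1 ▸ inv_ne_zero (by linarith)
  set M := 1 - (1 - γ) • (A * (diagonal d)⁻¹)
  have hS : DhalfInv * Dhalf = 1 := hDhalfInv ▸ hDhalf ▸ diagonal_inv_sqrt_mul_diagonal_sqrt hdpos
  have hshift : L - lam • 1 = (1 - γ)⁻¹ • (DhalfInv * M * Dhalf) := by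
    rw [Matrix.mul_sub, Matrix.sub_mul, mul_one, hS, Matrix.mul_smul, Matrix.smul_mul, hDhalf,
      hDhalfInv, diagonal_inv_sqrt_mul_mul_inv_diagonal_mul_diagonal_sqrt A fun i => (hdpos i).ne',
      ← hDhalfInv, hL, smul_sub, smul_smul, inv_mul_cancel₀ hγ1ne, one_smul, hγ1, inv_inv,
      sub_smul, one_smul]
    abel
  rw [hshift, inv_smul_of_ne_zero (inv_ne_zero hγ1ne), inv_inv, inv_conj_of_mul_eq_one hS, hη,
    hR, trace_smul, Matrix.mul_smul, Matrix.smul_mul, smul_smul, smul_smul, smul_eq_mul,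
    _root_.mul_inv_rev, _root_.mul_inv_rev, inv_mul_cancel_right₀ hγ1ne,
    inv_mul_cancel_right₀ hγ0]

/-- The regularized-SDP solution `(1/η)(L − λI)⁻¹` for the normalized Laplacian
equals the scaled-and-stretched PageRank matrix
`D^{-1/2} R_γ D^{1/2} / Tr(R_γ)`, with `γ = λ/(λ−1)` and
`η = (1−γ) Tr((I − (1−γ) A D⁻¹)⁻¹)`. -/
theorem pagerank_sdp_solution_identity
    {n : ℕ} (A : Matrix (Fin n) (Fin n) ℝ)
    (hAsymm : A.IsSymm) (hAnonneg : ∀ i j, 0 ≤ A i j)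
    (hconn : ∀ i j : Fin n, Relation.ReflTransGen (fun a b => 0 < A a b) i j)
    (d : Fin n → ℝ) (hd : ∀ i, d i = ∑ j, A i j) (hdpos : ∀ i, 0 < d i)
    (Dhalf DhalfInv L : Matrix (Fin n) (Fin n) ℝ)
    (hDhalf : Dhalf = Matrix.diagonal fun i => Real.sqrt (d i))
    (hDhalfInv : DhalfInv = Matrix.diagonal fun i => (Real.sqrt (d i))⁻¹)
    (hL : L = 1 - DhalfInv * A * DhalfInv)
    (lam γ η : ℝ) (hlam : lam < 0)
    (hγ : γ = lam / (lam - 1))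
    (hη : η = (1 - γ) * ((1 - (1 - γ) • (A * (Matrix.diagonal d)⁻¹))⁻¹).trace)
    (Rγ : Matrix (Fin n) (Fin n) ℝ)
    (hR : Rγ = γ • (1 - (1 - γ) • (A * (Matrix.diagonal d)⁻¹))⁻¹) :
    η⁻¹ • (L - lam • (1 : Matrix (Fin n) (Fin n) ℝ))⁻¹
      = Rγ.trace⁻¹ • (DhalfInv * Rγ * Dhalf) :=
  pagerank_sdp_solution_identity_general A d hdpos Dhalf DhalfInv L hDhalf hDhalfInv hL lam γ η hlam
    hγ hη Rγ hR
end
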